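/- Let R₀ > 0 and let ω be a twice continuously differentiable real-valued function on the exterior domain {z ∈ ℂ : |z| > R₀} satisfying Δω = 2·sinh(2ω). Set K₀ = ln 4 + (1/2)·ln((2+√5)/4). Then for every z with |z| > R₀ + 2, |ω(z)| ≤ K₀/cosh(|z| − R₀ − 2). In particular, ω(z) → 0 uniformly as |z| → ∞. -/

import Mathlib

/-!
It suffices to bound `ω` from above, since `-ω` solves the same equation. Both bounds come from
the maximum principle: a `C²` function has nonpositive Laplacian at an interior maximum, so on a
disk `ω - V` stays below its boundary values as long as `Δ(ω - V) > 0` wherever it exceeds them.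

On unit disks one compares with the solution `V = log (2 / (1 - |w - p|²))` of Liouville's
equation `ΔV = e^{2V}`, which blows up on the boundary circle: as `2 sinh 2t ≥ (15/16) e^{2t}` for
`t ≥ log 2`, this gives `ω ≤ log 2 + ½ log (16/15) ≤ K₀` at distance `1` from `|z| = R₀`. On the
disk of radius `r = |z| - R₀ - 2` around `z` one then compares with
`F = (K₀ / cosh r) cosh (√2 x) cosh (√2 y)`, which is at least `K₀` on the boundary circle and
satisfies `ΔF = 4F < 4ω ≤ 2 sinh 2ω` wherever `ω > F`.
-/

open Real Filter Metric Topology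

/-- The Euclidean Laplacian of a real-valued function on (an open subset of) `ℂ ≅ ℝ²`:
`Δf = ∂²f/∂x² + ∂²f/∂y²`. -/
noncomputable def laplacian (f : ℂ → ℝ) (z : ℂ) : ℝ :=
  fderiv ℝ (fun w => fderiv ℝ f w 1) z 1 +
    fderiv ℝ (fun w => fderiv ℝ f w Complex.I) z Complex.I

theorem IsLocalMax.deriv_deriv_nonpos {f : ℝ → ℝ} {a : ℝ} (h : IsLocalMax f a)
    (hf : ContinuousAt f a) : deriv (deriv f) a ≤ 0 := by
  by_contra! hpos
  have hmin : IsLocalMin f a := isLocalMin_of_deriv_deriv_pos hpos h.deriv_eq_zero hf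
  have hconst : f =ᶠ[𝓝 a] fun _ => f a := by
    filter_upwards [h, hmin] with x hmax hmin using le_antisymm hmax hmin
  simp [hconst.deriv.deriv_eq] at hpos

theorem deriv_deriv_eq_of_hasDerivAt {g g' : ℝ → ℝ} {x D : ℝ}
    (hg : ∀ᶠ t in 𝓝 x, HasDerivAt g (g' t) t) (hg' : HasDerivAt g' D x) :
    deriv (deriv g) x = D :=
  (EventuallyEq.deriv_eq (hg.mono fun _ ht => ht.deriv)).trans hg'.deriv

theorem fderiv_fderiv_apply_eq_deriv_deriv {E F : Type*} [NormedAddCommGroup E]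
    [NormedSpace ℝ E] [NormedAddCommGroup F] [NormedSpace ℝ F] {f : E → F} {z e : E}
    {ℓ : ℝ → E} {t₀ : ℝ} (hf : ContDiffAt ℝ 2 f z) (hℓ : ∀ t, HasDerivAt ℓ e t)
    (hℓ₀ : ℓ t₀ = z) :
    fderiv ℝ (fun w => fderiv ℝ f w e) z e = deriv (deriv (f ∘ ℓ)) t₀ := by
  subst hℓ₀
  have hnear : ∀ᶠ t in 𝓝 t₀, DifferentiableAt ℝ f (ℓ t) :=
    (hℓ t₀).continuousAt.eventually ((hf.eventually (by simp)).mono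
      fun w hw => hw.differentiableAt (by norm_num))
  have hderiv : deriv (f ∘ ℓ) =ᶠ[𝓝 t₀] fun t => fderiv ℝ f (ℓ t) e := by
    filter_upwards [hnear] with t ht using (ht.hasFDerivAt.comp_hasDerivAt t (hℓ t)).deriv
  have hd2 : DifferentiableAt ℝ (fun w => fderiv ℝ f w e) (ℓ t₀) :=
    ((hf.fderiv_right (m := 1) (by norm_num)).differentiableAt one_ne_zero).clm_apply
      (differentiableAt_const e)
  rw [hderiv.deriv_eq]
  exact (hd2.hasFDerivAt.comp_hasDerivAt t₀ (hℓ t₀)).deriv.symm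

theorem hasDerivAt_complex_mk_left (b x : ℝ) :
    HasDerivAt (fun x : ℝ => (⟨x, b⟩ : ℂ)) 1 x := by
  have : (fun x : ℝ => (⟨x, b⟩ : ℂ)) = fun x : ℝ => (x : ℂ) + b * Complex.I := by
    funext x; apply Complex.ext <;> simp
  rw [this]
  exact Complex.ofRealCLM.hasDerivAt.add_const _

theorem hasDerivAt_complex_mk_right (a y : ℝ) :
    HasDerivAt (fun y : ℝ => (⟨a, y⟩ : ℂ)) Complex.I y := by
  have : (fun y : ℝ => (⟨a, y⟩ : ℂ)) = fun y : ℝ => (a : ℂ) + y • Complex.I := by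
    funext y; apply Complex.ext <;> simp
  rw [this]
  simpa using ((hasDerivAt_id y).smul_const Complex.I).const_add (a : ℂ)

theorem laplacian_eq_deriv_deriv {f : ℂ → ℝ} {z : ℂ} (hf : ContDiffAt ℝ 2 f z) :
    laplacian f z = deriv (deriv fun x : ℝ => f ⟨x, z.im⟩) z.re +
      deriv (deriv fun y : ℝ => f ⟨z.re, y⟩) z.im := by
  rw [laplacian, fderiv_fderiv_apply_eq_deriv_deriv hf (hasDerivAt_complex_mk_left z.im) rfl,
    fderiv_fderiv_apply_eq_deriv_deriv hf (hasDerivAt_complex_mk_right z.re) rfl]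
  rfl

theorem laplacian_nonpos_of_isLocalMax {f : ℂ → ℝ} {z : ℂ} (hf : ContDiffAt ℝ 2 f z)
    (hmax : IsLocalMax f z) : laplacian f z ≤ 0 := by
  have hline : ∀ {ℓ : ℝ → ℂ} {t : ℝ}, ContinuousAt ℓ t → ℓ t = z →
      deriv (deriv (f ∘ ℓ)) t ≤ 0 := fun hℓ hz => by
    subst hz
    exact (hmax.comp_continuous hℓ).deriv_deriv_nonpos (hf.continuousAt.comp hℓ)
  rw [laplacian_eq_deriv_deriv hf]
  exact add_nonpos (hline (hasDerivAt_complex_mk_left z.im z.re).continuousAt rfl)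
    (hline (hasDerivAt_complex_mk_right z.re z.im).continuousAt rfl)

theorem laplacian_eq_laplacian_of_contDiffAt {f : ℂ → ℝ} {z : ℂ} (hf : ContDiffAt ℝ 2 f z) :
    laplacian f z = Laplacian.laplacian f z := by
  have hd : DifferentiableAt ℝ (fderiv ℝ f) z :=
    (hf.fderiv_right (m := 1) (by norm_num)).differentiableAt one_ne_zero
  simp only [InnerProductSpace.laplacian_eq_iteratedFDeriv_complexPlane, laplacian,
    iteratedFDeriv_two_apply, fderiv_clm_apply hd (differentiableAt_const _)]
  simp

theorem laplacian_sub {f g : ℂ → ℝ} {z : ℂ} (hf : ContDiffAt ℝ 2 f z)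
    (hg : ContDiffAt ℝ 2 g z) : laplacian (f - g) z = laplacian f z - laplacian g z := by
  rw [laplacian_eq_laplacian_of_contDiffAt hf, laplacian_eq_laplacian_of_contDiffAt hg,
    laplacian_eq_laplacian_of_contDiffAt (show ContDiffAt ℝ 2 (f - g) z from hf.sub hg), hf.laplacian_sub hg]

theorem laplacian_neg (f : ℂ → ℝ) (z : ℂ) : laplacian (-f) z = -laplacian f z := by
  simp only [laplacian, fderiv_neg, neg_apply, fderiv_fun_neg, neg_add_rev]
  ring

theorem le_of_forall_mem_frontier_le {U : Set ℂ} (hU : IsOpen U) (hUb : Bornology.IsBounded U)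
    {h : ℂ → ℝ} {κ : ℝ} (hh : ContDiffOn ℝ 2 h (closure U))
    (hfr : ∀ w ∈ frontier U, h w ≤ κ) (hlap : ∀ w ∈ U, κ < h w → 0 < laplacian h w) :
    ∀ w ∈ U, h w ≤ κ := by
  intro w hw
  by_contra! hκ
  obtain ⟨q, hqU, hqmax⟩ := hUb.isCompact_closure.exists_isMaxOn ⟨w, subset_closure hw⟩
    hh.continuousOn
  have hq : κ < h q := hκ.trans_le (hqmax (subset_closure hw))
  have hqU : q ∈ U := by
    by_contra hq'
    exact (hfr q ⟨hqU, by rwa [hU.interior_eq]⟩).not_gt hq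
  have hnhds : closure U ∈ 𝓝 q := mem_of_superset (hU.mem_nhds hqU) subset_closure
  exact (laplacian_nonpos_of_isLocalMax (hh.contDiffAt hnhds)
    (mem_of_superset hnhds hqmax)).not_gt (hlap q hqU hq)

theorem sq_dist_eq_re_im (w z : ℂ) :
    dist w z ^ 2 = (w.re - z.re) ^ 2 + (w.im - z.im) ^ 2 := by
  rw [Complex.dist_eq_re_im, sq_sqrt (by positivity)]

theorem deriv_deriv_log_two_sub_log {c a x : ℝ} (hx : 0 < c - (x - a) ^ 2) :
    deriv (deriv fun x => log 2 - log (c - (x - a) ^ 2)) x =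
      2 / (c - (x - a) ^ 2) + 4 * (x - a) ^ 2 / (c - (x - a) ^ 2) ^ 2 := by
  have hA : ∀ x, HasDerivAt (fun x => c - (x - a) ^ 2) (-(2 * (x - a))) x := fun x => by
    simpa using (((hasDerivAt_id x).sub_const a).pow 2).const_sub c
  have hnear : ∀ᶠ t in 𝓝 x, 0 < c - (t - a) ^ 2 :=
    (hA x).continuousAt.eventually (lt_mem_nhds hx)
  refine deriv_deriv_eq_of_hasDerivAt (g' := fun x => 2 * (x - a) / (c - (x - a) ^ 2))
    (hnear.mono fun t ht => ?_) ?_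
  · refine (((hA t).log ht.ne').const_sub (log 2)).congr_deriv ?_
    ring
  · have h2 : HasDerivAt (fun x => 2 * (x - a)) 2 x := by
      simpa using ((hasDerivAt_id x).sub_const a).const_mul 2
    refine (h2.div (hA x) hx.ne').congr_deriv ?_
    field_simp
    ring

theorem exp_two_mul_log_two_sub_log {A : ℝ} (hA : 0 < A) :
    exp (2 * (log 2 - log A)) = 4 / A ^ 2 := by
  rw [← log_div two_ne_zero hA.ne', two_mul, exp_add, exp_log (by positivity)]
  ring

noncomputable def liouvilleBarrier (p w : ℂ) : ℝ := log 2 - log (1 - dist w p ^ 2)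

theorem one_sub_sq_dist_pos {p w : ℂ} (hw : w ∈ ball p 1) : 0 < 1 - dist w p ^ 2 := by
  nlinarith [mem_ball.1 hw, dist_nonneg (x := w) (y := p)]

theorem liouvilleBarrier_eq_re_im (p : ℂ) : liouvilleBarrier p =
    fun w => log 2 - log (1 - ((w.re - p.re) ^ 2 + (w.im - p.im) ^ 2)) := by
  funext w
  rw [liouvilleBarrier, sq_dist_eq_re_im]

theorem contDiffOn_liouvilleBarrier (p : ℂ) :
    ContDiffOn ℝ 2 (liouvilleBarrier p) (ball p 1) := by
  intro w hw
  have hre : ContDiff ℝ 2 Complex.re := Complex.reCLM.contDiff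
  have him : ContDiff ℝ 2 Complex.im := Complex.imCLM.contDiff
  have hA : ContDiffAt ℝ 2 (fun w : ℂ => 1 - ((w.re - p.re) ^ 2 + (w.im - p.im) ^ 2)) w := by
    fun_prop
  have hpos := one_sub_sq_dist_pos hw
  rw [sq_dist_eq_re_im] at hpos
  rw [liouvilleBarrier_eq_re_im]
  exact (contDiffAt_const.sub (hA.log hpos.ne')).contDiffWithinAt

theorem laplacian_liouvilleBarrier {p w : ℂ} (hw : w ∈ ball p 1) :
    laplacian (liouvilleBarrier p) w = exp (2 * liouvilleBarrier p w) := by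
  have hpos := one_sub_sq_dist_pos hw
  rw [sq_dist_eq_re_im] at hpos
  have hx : (fun x : ℝ => liouvilleBarrier p ⟨x, w.im⟩) =
      fun x => log 2 - log ((1 - (w.im - p.im) ^ 2) - (x - p.re) ^ 2) := by
    funext x; rw [liouvilleBarrier, sq_dist_eq_re_im]; ring_nf
  have hy : (fun y : ℝ => liouvilleBarrier p ⟨w.re, y⟩) =
      fun y => log 2 - log ((1 - (w.re - p.re) ^ 2) - (y - p.im) ^ 2) := by
    funext y; rw [liouvilleBarrier, sq_dist_eq_re_im]; ring_nf
  rw [laplacian_eq_deriv_deriv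
      ((contDiffOn_liouvilleBarrier p).contDiffAt (isOpen_ball.mem_nhds hw)),
    hx, hy, deriv_deriv_log_two_sub_log (by linarith), deriv_deriv_log_two_sub_log (by linarith),
    liouvilleBarrier, sq_dist_eq_re_im, exp_two_mul_log_two_sub_log hpos]
  generalize (w.re - p.re) ^ 2 = α at hpos ⊢
  generalize (w.im - p.im) ^ 2 = β at hpos ⊢
  rw [show 1 - β - α = 1 - (α + β) by ring, show 1 - α - β = 1 - (α + β) by ring]
  field_simp
  ring

theorem exists_lt_one_forall_mem_sphere_le_liouvilleBarrier (p : ℂ) (M : ℝ) :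
    ∃ ρ, 0 < ρ ∧ ρ < 1 ∧ ∀ w ∈ sphere p ρ, M ≤ liouvilleBarrier p w := by
  set δ := min (1 / 2) (exp (-M))
  have hδ : 0 < δ := by positivity
  have hδ2 : δ ≤ 1 / 2 := min_le_left _ _
  have hδM : log δ ≤ -M := (log_le_log hδ (min_le_right _ _)).trans (log_exp _).le
  refine ⟨√(1 - δ), sqrt_pos.2 (by linarith), (sqrt_lt' one_pos).2 (by linarith), fun w hw => ?_⟩
  rw [liouvilleBarrier, mem_sphere.1 hw, sq_sqrt (by linarith), sub_sub_cancel]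
  linarith [log_pos one_lt_two]

theorem deriv_deriv_cosh_sqrt_two_mul_sub (a x : ℝ) :
    deriv (deriv fun x => cosh (√2 * (x - a))) x = 2 * cosh (√2 * (x - a)) := by
  have hlin : ∀ x, HasDerivAt (fun x => √2 * (x - a)) √2 x := fun x => by
    simpa using ((hasDerivAt_id x).sub_const a).const_mul √2
  refine deriv_deriv_eq_of_hasDerivAt (g' := fun x => sinh (√2 * (x - a)) * √2)
    (Eventually.of_forall fun x => (hlin x).cosh) ?_
  refine (((hlin x).sinh).mul_const √2).congr_deriv ?_
  rw [mul_assoc, mul_self_sqrt zero_le_two, mul_comm]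

theorem cosh_le_cosh_mul_cosh {a b r : ℝ} (h : 2 * r ^ 2 ≤ a ^ 2 + b ^ 2) :
    cosh r ≤ cosh a * cosh b := by
  rcases le_total (a ^ 2) (b ^ 2) with hab | hab
  · calc cosh r ≤ cosh b := cosh_le_cosh.2 (sq_le_sq.1 (by linarith))
      _ ≤ cosh a * cosh b := le_mul_of_one_le_left (cosh_pos b).le (one_le_cosh a)
  · calc cosh r ≤ cosh a := cosh_le_cosh.2 (sq_le_sq.1 (by linarith))
      _ ≤ cosh a * cosh b := le_mul_of_one_le_right (cosh_pos a).le (one_le_cosh b)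

noncomputable def coshBarrier (C : ℝ) (z w : ℂ) : ℝ :=
  C * (cosh (√2 * (w.re - z.re)) * cosh (√2 * (w.im - z.im)))

theorem contDiff_coshBarrier (C : ℝ) (z : ℂ) : ContDiff ℝ 2 (coshBarrier C z) := by
  have hre : ContDiff ℝ 2 Complex.re := Complex.reCLM.contDiff
  have him : ContDiff ℝ 2 Complex.im := Complex.imCLM.contDiff
  unfold coshBarrier
  fun_prop

theorem laplacian_coshBarrier (C : ℝ) (z w : ℂ) :
    laplacian (coshBarrier C z) w = 4 * coshBarrier C z w := by
  rw [laplacian_eq_deriv_deriv (contDiff_coshBarrier C z).contDiffAt]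
  simp only [coshBarrier, deriv_mul_const_field', deriv_const_mul_field',
    deriv_deriv_cosh_sqrt_two_mul_sub]
  ring

theorem coshBarrier_self (C : ℝ) (z : ℂ) : coshBarrier C z z = C := by simp [coshBarrier]

theorem coshBarrier_nonneg {C : ℝ} (hC : 0 ≤ C) (z w : ℂ) : 0 ≤ coshBarrier C z w := by
  unfold coshBarrier
  positivity

theorem mul_cosh_le_coshBarrier {C r : ℝ} (hC : 0 ≤ C) {z w : ℂ} (hw : w ∈ sphere z r) :
    C * cosh r ≤ coshBarrier C z w := by
  refine mul_le_mul_of_nonneg_left (cosh_le_cosh_mul_cosh ?_) hC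
  rw [mul_pow, mul_pow, sq_sqrt zero_le_two, ← mem_sphere.1 hw, sq_dist_eq_re_im]
  linarith

theorem fifteen_div_sixteen_mul_exp_le_two_mul_sinh {t : ℝ} (ht : log 2 ≤ t) :
    15 / 16 * exp (2 * t) ≤ 2 * sinh (2 * t) := by
  have h4 : 4 ≤ exp (2 * t) := by
    calc (4 : ℝ) = exp (2 * log 2) := by rw [two_mul, exp_add, exp_log two_pos]; norm_num
      _ ≤ exp (2 * t) := by gcongr
  have hinv : exp (2 * t) * exp (-(2 * t)) = 1 := by rw [← exp_add, add_neg_cancel, exp_zero]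
  rw [sinh_eq]
  nlinarith [exp_pos (-(2 * t))]

theorem laplacian_sub_liouvilleBarrier_pos {ω : ℂ → ℝ} {p w : ℂ} (hw : w ∈ ball p 1)
    (hω : ContDiffAt ℝ 2 ω w) (heq : laplacian ω w = 2 * sinh (2 * ω w))
    (hlt : log (16 / 15) / 2 < ω w - liouvilleBarrier p w) :
    0 < laplacian (ω - liouvilleBarrier p) w := by
  have hV : log 2 ≤ liouvilleBarrier p w := by
    have := one_sub_sq_dist_pos hw
    have : log (1 - dist w p ^ 2) ≤ 0 := log_nonpos this.le (by nlinarith)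
    rw [liouvilleBarrier]; linarith
  have hexp : exp (2 * liouvilleBarrier p w) < 15 / 16 * exp (2 * ω w) := by
    calc exp (2 * liouvilleBarrier p w)
        = 15 / 16 * exp (2 * (liouvilleBarrier p w + log (16 / 15) / 2)) := by
          rw [mul_add, exp_add, mul_div_cancel₀ _ two_ne_zero, exp_log (by norm_num)]; ring
      _ < 15 / 16 * exp (2 * ω w) := by gcongr; linarith
  rw [laplacian_sub hω ((contDiffOn_liouvilleBarrier p).contDiffAt (isOpen_ball.mem_nhds hw)),
    heq, laplacian_liouvilleBarrier hw]
  linarith [fifteen_div_sixteen_mul_exp_le_two_mul_sinh (t := ω w)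
    (by linarith [show 0 < log (16 / 15) from log_pos (by norm_num)])]

theorem le_of_laplacian_eq_two_sinh_on_closedBall {ω : ℂ → ℝ} {p : ℂ}
    (hω : ContDiffOn ℝ 2 ω (closedBall p 1))
    (heq : ∀ w ∈ ball p 1, laplacian ω w = 2 * sinh (2 * ω w)) :
    ω p ≤ log 2 + log (16 / 15) / 2 := by
  obtain ⟨M, hM⟩ := (isCompact_closedBall p 1).bddAbove_image hω.continuousOn
  obtain ⟨ρ, hρ, hρ1, hVM⟩ := exists_lt_one_forall_mem_sphere_le_liouvilleBarrier p M
  have hball : ball p ρ ⊆ ball p 1 := ball_subset_ball hρ1.le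
  have hcomp := le_of_forall_mem_frontier_le (h := ω - liouvilleBarrier p) isOpen_ball
    isBounded_ball ?_ ?_ (fun w hw => laplacian_sub_liouvilleBarrier_pos (hball hw)
      (hω.contDiffAt (mem_of_superset (isOpen_ball.mem_nhds (hball hw)) ball_subset_closedBall))
      (heq w (hball hw))) p (mem_ball_self hρ)
  · have hVp : liouvilleBarrier p p = log 2 := by simp [liouvilleBarrier]
    simp only [Pi.sub_apply, hVp] at hcomp
    linarith
  · rw [closure_ball p hρ.ne']
    exact (hω.mono (closedBall_subset_closedBall hρ1.le)).sub
      ((contDiffOn_liouvilleBarrier p).mono (closedBall_subset_ball hρ1))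
  · rw [frontier_ball p hρ.ne']
    intro w hw
    have hωw : ω w ≤ M :=
      hM ⟨w, closedBall_subset_closedBall hρ1.le (sphere_subset_closedBall hw), rfl⟩
    show ω w - liouvilleBarrier p w ≤ _
    linarith [hVM w hw, show 0 < log (16 / 15) from log_pos (by norm_num)]

theorem le_div_cosh_of_laplacian_eq_two_sinh_on_closedBall {ω : ℂ → ℝ} {z : ℂ} {r K : ℝ}
    (hr : 0 < r) (hK : 0 ≤ K) (hω : ContDiffOn ℝ 2 ω (closedBall z r))
    (heq : ∀ w ∈ ball z r, laplacian ω w = 2 * sinh (2 * ω w))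
    (hbd : ∀ w ∈ sphere z r, ω w ≤ K) :
    ω z ≤ K / cosh r := by
  set C := K / cosh r
  have hC : 0 ≤ C := div_nonneg hK (cosh_pos r).le
  have hcomp := le_of_forall_mem_frontier_le (h := ω - coshBarrier C z) (κ := 0) isOpen_ball
    isBounded_ball ?_ ?_ ?_ z (mem_ball_self hr)
  · simpa [coshBarrier_self, sub_nonpos] using hcomp
  · rw [closure_ball z hr.ne']
    exact hω.sub (contDiff_coshBarrier C z).contDiffOn
  · rw [frontier_ball z hr.ne']
    intro w hw
    have hKC : K = C * cosh r := (div_mul_cancel₀ K (cosh_pos r).ne').symm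
    show ω w - coshBarrier C z w ≤ 0
    linarith [hbd w hw, mul_cosh_le_coshBarrier hC hw]
  · intro w hw hlt
    have hωw : ContDiffAt ℝ 2 ω w :=
      hω.contDiffAt (mem_of_superset (isOpen_ball.mem_nhds hw) ball_subset_closedBall)
    replace hlt : coshBarrier C z w < ω w := sub_pos.1 hlt
    have hF := coshBarrier_nonneg hC z w
    rw [laplacian_sub hωw (contDiff_coshBarrier C z).contDiffAt, heq w hw,
      laplacian_coshBarrier]
    linarith [self_le_sinh_iff.2 (show 0 ≤ 2 * ω w by linarith)]

theorem closedBall_subset_setOf_lt_norm {E : Type*} [SeminormedAddCommGroup E] {z : E}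
    {r R : ℝ} (h : R + r < ‖z‖) : closedBall z r ⊆ {w | R < ‖w‖} := fun w hw => by
  have := norm_sub_norm_le z w
  rw [← dist_eq_norm, dist_comm] at this
  show R < ‖w‖
  linarith [mem_closedBall.1 hw]

theorem le_div_cosh_of_laplacian_eq_two_sinh_on_exterior {ω : ℂ → ℝ} {R₀ K : ℝ}
    (hω : ContDiffOn ℝ 2 ω {z : ℂ | R₀ < ‖z‖})
    (heq : ∀ z : ℂ, R₀ < ‖z‖ → laplacian ω z = 2 * sinh (2 * ω z))
    (hK : log 2 + log (16 / 15) / 2 ≤ K) {z : ℂ} (hz : R₀ + 2 < ‖z‖) :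
    ω z ≤ K / cosh (‖z‖ - R₀ - 2) := by
  have hdisk : closedBall z (‖z‖ - R₀ - 2) ⊆ {w : ℂ | R₀ + 1 < ‖w‖} :=
    closedBall_subset_setOf_lt_norm (by linarith)
  have hshrink : {w : ℂ | R₀ + 1 < ‖w‖} ⊆ {w : ℂ | R₀ < ‖w‖} :=
    fun w (hw : R₀ + 1 < ‖w‖) => show R₀ < ‖w‖ by linarith
  have hsphere : ∀ w ∈ sphere z (‖z‖ - R₀ - 2), ω w ≤ K := fun w hw => by
    have hunit := closedBall_subset_setOf_lt_norm (hdisk (sphere_subset_closedBall hw))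
    exact (le_of_laplacian_eq_two_sinh_on_closedBall (hω.mono hunit)
      fun v hv => heq v (hunit (ball_subset_closedBall hv))).trans hK
  exact le_div_cosh_of_laplacian_eq_two_sinh_on_closedBall (by linarith)
    (le_trans (by positivity) hK) (hω.mono (hdisk.trans hshrink))
    (fun w hw => heq w (hshrink (hdisk (ball_subset_closedBall hw)))) hsphere

theorem tendsto_cosh_atTop : Tendsto cosh atTop atTop :=
  tendsto_atTop_mono' atTop ((eventually_ge_atTop 0).mono fun x hx =>
    (self_le_sinh_iff.2 hx).trans (sinh_lt_cosh x).le) tendsto_id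

theorem tendsto_div_cosh_norm_sub {E : Type*} [Norm E] (K a : ℝ) :
    Tendsto (fun z : E => K / cosh (‖z‖ - a)) (comap (fun z : E => ‖z‖) atTop) (𝓝 0) := by
  have hsub : Tendsto (fun x : ℝ => x - a) atTop atTop :=
    tendsto_atTop_add_const_right atTop (-a) tendsto_id
  exact (tendsto_const_nhds.div_atTop (tendsto_cosh_atTop.comp hsub)).comp tendsto_comap

theorem log_two_add_half_log_le :
    log 2 + log (16 / 15) / 2 ≤ log 4 + 1 / 2 * log ((2 + √5) / 4) := by
  have h5 : log (16 / 15) ≤ log (2 + √5) :=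
    log_le_log (by norm_num) (by linarith [sqrt_nonneg 5])
  have h4 : log 4 = 2 * log 2 := by
    rw [show (4 : ℝ) = 2 ^ 2 by norm_num, log_pow, Nat.cast_ofNat]
  rw [log_div (show 2 + √5 ≠ 0 by positivity) four_ne_zero, h4]
  linarith

theorem stmt5_general (R₀ : ℝ) (ω : ℂ → ℝ)
    (hC2 : ContDiffOn ℝ 2 ω {z : ℂ | R₀ < ‖z‖})
    (heq : ∀ z : ℂ, R₀ < ‖z‖ → laplacian ω z = 2 * Real.sinh (2 * ω z)) :
    (∀ z : ℂ, R₀ + 2 < ‖z‖ →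
      |ω z| ≤ (Real.log 4 + (1 / 2) * Real.log ((2 + Real.sqrt 5) / 4)) /
        Real.cosh (‖z‖ - R₀ - 2)) ∧
      Filter.Tendsto ω (Filter.comap (fun z : ℂ => ‖z‖) Filter.atTop) (nhds 0) := by
  have hK := log_two_add_half_log_le
  set K₀ := log 4 + 1 / 2 * log ((2 + √5) / 4)
  have heq_neg : ∀ z : ℂ, R₀ < ‖z‖ → laplacian (-ω) z = 2 * sinh (2 * (-ω) z) := fun z hz => by
    rw [laplacian_neg, heq z hz, Pi.neg_apply, mul_neg, sinh_neg, mul_neg]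
  have hbound : ∀ z : ℂ, R₀ + 2 < ‖z‖ → |ω z| ≤ K₀ / cosh (‖z‖ - R₀ - 2) := fun z hz =>
    abs_le.2 ⟨neg_le.1 (le_div_cosh_of_laplacian_eq_two_sinh_on_exterior hC2.neg heq_neg hK hz),
      le_div_cosh_of_laplacian_eq_two_sinh_on_exterior hC2 heq hK hz⟩
  refine ⟨hbound, squeeze_zero_norm' ?_ (tendsto_div_cosh_norm_sub K₀ (R₀ + 2))⟩
  filter_upwards [preimage_mem_comap (Ioi_mem_atTop (R₀ + 2))] with z hz
  simpa only [norm_eq_abs, sub_sub] using hbound z hz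

/-- Exponential decay of solutions of the sinh-Gordon equation on an exterior domain
(Claim 1 of the paper): with `K₀ = ln 4 + ½ ln((2+√5)/4)`, one has
`|ω(z)| ≤ K₀ / cosh(|z| − R₀ − 2)` for `|z| > R₀ + 2`; in particular `ω(z) → 0`
uniformly as `|z| → ∞`. -/
theorem stmt5 (R₀ : ℝ) (hR₀ : 0 < R₀) (ω : ℂ → ℝ)
    (hC2 : ContDiffOn ℝ 2 ω {z : ℂ | R₀ < ‖z‖})
    (heq : ∀ z : ℂ, R₀ < ‖z‖ → laplacian ω z = 2 * Real.sinh (2 * ω z)) :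
    (∀ z : ℂ, R₀ + 2 < ‖z‖ →
      |ω z| ≤ (Real.log 4 + (1 / 2) * Real.log ((2 + Real.sqrt 5) / 4)) /
        Real.cosh (‖z‖ - R₀ - 2)) ∧
      Filter.Tendsto ω (Filter.comap (fun z : ℂ => ‖z‖) Filter.atTop) (nhds 0) :=
  stmt5_general R₀ ω hC2 heq
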